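/- Let $\tau_0 := (\sqrt 5 - 1)/2$ and $\tau_{k+1} := \frac{\tau_k}{2}\big(\sqrt{\tau_k^2 + 4} - \tau_k\big)$ for $k \ge 0$. Then $\tau_k \in (0,1)$ for all $k$, the identity $\tau_{k+1}^2 = (1-\tau_{k+1})\tau_k^2$ holds, and the product $\beta_{k} := \beta_0 \prod_{i=0}^{k-1}(1-\tau_i)$ satisfies $\beta_k \le \frac{4\beta_0}{(k+2)^2}$ for all $k \ge 0$. -/

import Mathlib

/-!
The update takes `τ_{k+1}` to be the positive root `s` of `s² = (1 - s) τ_k²`. Since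
`τ₀² = 1 - τ₀`, the product `∏_{i ≤ k} (1 - τ_i)` telescopes to `τ_k²`. Dividing the relation
by `s² τ_k²` gives `1/s² - 1/τ_k² = 1/s`, whence `1/τ_{k+1} ≥ 1/τ_k + 1/2`; with
`1/τ₀ ≥ 3/2` this yields `τ_k ≤ 2/(k+3)`, so `τ_k < 1` and `∏_{i<k} (1 - τ_i) ≤ 4/(k+2)²`.
-/

open Finset

noncomputable def stepsizeNext (t : ℝ) : ℝ := t / 2 * (√(t ^ 2 + 4) - t)

theorem sq_stepsizeNext (t : ℝ) : stepsizeNext t ^ 2 = (1 - stepsizeNext t) * t ^ 2 := by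
  have h : √(t ^ 2 + 4) ^ 2 = t ^ 2 + 4 := Real.sq_sqrt (by positivity)
  unfold stepsizeNext
  linear_combination (t ^ 2 / 4) * h

theorem stepsizeNext_pos {t : ℝ} (ht : 0 < t) : 0 < stepsizeNext t := by
  have : t < √(t ^ 2 + 4) := Real.lt_sqrt_of_sq_lt (by linarith)
  exact mul_pos (half_pos ht) (sub_pos.2 this)

theorem inv_add_half_le_inv {s t : ℝ} (hs : 0 < s) (ht : 0 < t)
    (h : s ^ 2 = (1 - s) * t ^ 2) : t⁻¹ + 1 / 2 ≤ s⁻¹ := by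
  -- `h` gives `s t² = t² - s²`, hence `t (2 (t - s) - s t) = (t - s)²`.
  have key : s * t ≤ 2 * (t - s) :=
    le_of_mul_le_mul_left (by nlinarith [sq_nonneg (t - s)]) ht
  rw [inv_eq_one_div, inv_eq_one_div, div_add_div _ _ ht.ne' two_ne_zero,
    div_le_div_iff₀ (by positivity) hs]
  linarith

section Stepsize

variable {τ : ℕ → ℝ}

theorem stepsize_pos (h0 : 0 < τ 0) (hτ : ∀ k, τ (k + 1) = stepsizeNext (τ k)) (k : ℕ) :
    0 < τ k := by
  induction k with
  | zero => exact h0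
  | succ k ih => exact hτ k ▸ stepsizeNext_pos ih

theorem sq_stepsize_succ (hτ : ∀ k, τ (k + 1) = stepsizeNext (τ k)) (k : ℕ) :
    τ (k + 1) ^ 2 = (1 - τ (k + 1)) * τ k ^ 2 :=
  hτ k ▸ sq_stepsizeNext (τ k)

theorem inv_stepsize_ge (h0 : 0 < τ 0) (hτ : ∀ k, τ (k + 1) = stepsizeNext (τ k)) (k : ℕ) :
    (τ 0)⁻¹ + k / 2 ≤ (τ k)⁻¹ := by
  induction k with
  | zero => simp
  | succ k ih =>
    have step := inv_add_half_le_inv (stepsize_pos h0 hτ (k + 1)) (stepsize_pos h0 hτ k)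
      (sq_stepsize_succ hτ k)
    push_cast
    linarith

theorem stepsize_le (h0 : 0 < τ 0) (h0le : τ 0 ≤ 2 / 3)
    (hτ : ∀ k, τ (k + 1) = stepsizeNext (τ k)) (k : ℕ) : τ k ≤ 2 / (k + 3) := by
  have hinv := inv_stepsize_ge h0 hτ k
  have h0inv : 3 / 2 ≤ (τ 0)⁻¹ := by
    rw [le_inv_comm₀ (by norm_num) h0]; linarith
  rw [← inv_div]
  exact (le_inv_comm₀ (stepsize_pos h0 hτ k) (by positivity)).2 (by linarith)

theorem stepsize_lt_one (h0 : 0 < τ 0) (h0le : τ 0 ≤ 2 / 3)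
    (hτ : ∀ k, τ (k + 1) = stepsizeNext (τ k)) (k : ℕ) : τ k < 1 :=
  (stepsize_le h0 h0le hτ k).trans_lt <|
    (div_lt_one (by positivity)).2 (by linarith [k.cast_nonneg (α := ℝ)])

theorem prod_range_succ_one_sub_stepsize (h0 : τ 0 ^ 2 = 1 - τ 0)
    (hτ : ∀ k, τ (k + 1) ^ 2 = (1 - τ (k + 1)) * τ k ^ 2) (k : ℕ) :
    ∏ i ∈ range (k + 1), (1 - τ i) = τ k ^ 2 := by
  induction k with
  | zero => rw [prod_range_one, h0]
  | succ k ih => rw [prod_range_succ, ih, hτ, mul_comm]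

theorem prod_range_one_sub_stepsize_le (h0 : 0 < τ 0) (h0le : τ 0 ≤ 2 / 3)
    (h0sq : τ 0 ^ 2 = 1 - τ 0) (hτ : ∀ k, τ (k + 1) = stepsizeNext (τ k)) (k : ℕ) :
    ∏ i ∈ range k, (1 - τ i) ≤ 4 / ((k : ℝ) + 2) ^ 2 := by
  cases k with
  | zero => norm_num
  | succ k =>
    rw [prod_range_succ_one_sub_stepsize h0sq (sq_stepsize_succ hτ) k]
    calc τ k ^ 2 ≤ (2 / (k + 3)) ^ 2 :=
          pow_le_pow_left₀ (stepsize_pos h0 hτ k).le (stepsize_le h0 h0le hτ k) 2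
      _ = 4 / ((k + 1 : ℕ) + 2) ^ 2 := by rw [div_pow]; push_cast; ring

end Stepsize

/-- Step-size update for the strongly convex variant: `τ₀ = (√5-1)/2`,
`τ_{k+1} = τ_k(√(τ_k²+4) - τ_k)/2`; then `τ_k ∈ (0,1)`, `τ_{k+1}² = (1-τ_{k+1})τ_k²`,
and `β_k := β₀ ∏_{i<k}(1-τ_i) ≤ 4β₀/(k+2)²`. -/
theorem strongly_convex_stepsize (τ : ℕ → ℝ) (β₀ : ℝ) (hβ₀ : 0 < β₀)
    (hτ0 : τ 0 = (Real.sqrt 5 - 1) / 2)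
    (hτrec : ∀ k, τ (k+1) = τ k / 2 * (Real.sqrt ((τ k)^2 + 4) - τ k)) :
    (∀ k, τ k ∈ Set.Ioo (0:ℝ) 1) ∧
    (∀ k, (τ (k+1))^2 = (1 - τ (k+1)) * (τ k)^2) ∧
    (∀ k : ℕ, β₀ * ∏ i ∈ Finset.range k, (1 - τ i) ≤ 4 * β₀ / ((k : ℝ) + 2)^2) := by
  have hnext : ∀ k, τ (k + 1) = stepsizeNext (τ k) := hτrec
  have h5 : √5 ^ 2 = 5 := Real.sq_sqrt (by norm_num)
  have h0 : 0 < τ 0 := by rw [hτ0]; nlinarith [Real.sqrt_nonneg 5]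
  have h0le : τ 0 ≤ 2 / 3 := by rw [hτ0]; nlinarith [Real.sqrt_nonneg 5]
  have h0sq : τ 0 ^ 2 = 1 - τ 0 := by rw [hτ0]; linear_combination h5 / 4
  refine ⟨fun k => ⟨stepsize_pos h0 hnext k, stepsize_lt_one h0 h0le hnext k⟩,
    sq_stepsize_succ hnext, fun k => ?_⟩
  rw [mul_comm 4, mul_div_assoc]
  exact mul_le_mul_of_nonneg_left (prod_range_one_sub_stepsize_le h0 h0le h0sq hnext k) hβ₀.le
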